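/- For every real q with 0 < q < 1: Σ_{a,b∈ℤ} q^{2(a²+ab+b²)} = (Σ_{m∈ℤ} q^{2(m+1/2)²})·(Σ_{m∈ℤ} q^{6(m+1/2)²}) + (Σ_{m∈ℤ} q^{2m²})·(Σ_{m∈ℤ} q^{6m²}), i.e. the theta series of the hexagonal lattice A₂ (scaled to minimum norm 2) satisfies Θ_{A₂}(τ) = ϑ₂(2τ)ϑ₂(6τ) + ϑ₃(2τ)ϑ₃(6τ). -/

import Mathlib

/-!
Writing `a² + ab + b² = (a + b/2)² + 3 (b/2)²` and splitting according to the parity of `b`,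
the substitution `(a, b) = (m - n, 2n + 1)` turns the odd part into `(m + 1/2)² + 3 (n + 1/2)²`
and `(a, b) = (m - n, 2n)` turns the even part into `m² + 3n²`. Each part is then a product of
two one-variable theta series.
-/

open Real

lemma summable_rpow_mul_add_sq {q c : ℝ} (hq0 : 0 < q) (hq1 : q < 1) (hc : 0 < c) (a : ℝ) :
    Summable fun m : ℤ => q ^ (c * ((m : ℝ) + a) ^ 2) := by
  -- `q ^ (c x²) = exp (-π t x²)` for this `t`, a shifted Gaussian term
  have ht : 0 < -(c * log q) / π :=
    div_pos (neg_pos.mpr (mul_neg_of_pos_of_neg hc (log_neg hq0 hq1))) pi_pos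
  refine (HurwitzKernelBounds.summable_f_int 0 a ht).congr fun m => ?_
  rw [HurwitzKernelBounds.f_int, pow_zero, one_mul, rpow_def_of_pos hq0]
  congr 1
  field_simp

lemma hasSum_mul_of_nonneg {ι κ : Type*} {f : ι → ℝ} {g : κ → ℝ} (hf : Summable f)
    (hg : Summable g) (hf0 : 0 ≤ f) (hg0 : 0 ≤ g) :
    HasSum (fun x : ι × κ => f x.1 * g x.2) ((∑' i, f i) * ∑' k, g k) :=
  hf.hasSum.mul hg.hasSum (hf.mul_of_nonneg hg hf0 hg0)

def oddEvenShearEquiv : (ℤ × ℤ) ⊕ (ℤ × ℤ) ≃ ℤ × ℤ where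
  toFun := Sum.elim (fun p => (p.1 - p.2, 2 * p.2 + 1)) (fun p => (p.1 - p.2, 2 * p.2))
  invFun p := if p.2 % 2 = 0 then .inr (p.1 + p.2 / 2, p.2 / 2) else .inl (p.1 + p.2 / 2, p.2 / 2)
  left_inv := by
    rintro (⟨m, n⟩ | ⟨m, n⟩)
    · have hodd : (2 * n + 1) % 2 ≠ 0 := by omega
      simp only [Sum.elim_inl, hodd, if_false, Sum.inl.injEq, Prod.ext_iff]
      omega
    · simp only [Sum.elim_inr, Int.mul_emod_right, if_true, Sum.inr.injEq, Prod.ext_iff]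
      omega
  right_inv := by
    rintro ⟨a, b⟩
    by_cases hb : b % 2 = 0 <;> simp only [hb, if_true, if_false, Sum.elim_inl, Sum.elim_inr,
      Prod.ext_iff] <;> omega

/-- The theta series of the hexagonal lattice `A₂` (scaled to minimum
norm `2`) satisfies `Θ_{A₂}(τ) = ϑ₂(2τ)ϑ₂(6τ) + ϑ₃(2τ)ϑ₃(6τ)` for `0 < q < 1`. -/
theorem theta_A2 (q : ℝ) (h0 : 0 < q) (h1 : q < 1) :
    (∑' p : ℤ × ℤ, q ^ (2 * ((p.1 : ℝ) ^ 2 + (p.1 : ℝ) * (p.2 : ℝ) + (p.2 : ℝ) ^ 2))) =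
      (∑' m : ℤ, q ^ (2 * ((m : ℝ) + 1/2) ^ 2)) * (∑' m : ℤ, q ^ (6 * ((m : ℝ) + 1/2) ^ 2)) +
        (∑' m : ℤ, q ^ (2 * (m : ℝ) ^ 2)) * (∑' m : ℤ, q ^ (6 * (m : ℝ) ^ 2)) := by
  have hθ (c a : ℝ) (hc : 0 < c) := summable_rpow_mul_add_sq h0 h1 hc a
  have hθ₀ (c : ℝ) (hc : 0 < c) : Summable fun m : ℤ => q ^ (c * (m : ℝ) ^ 2) := by
    simpa using hθ c 0 hc
  have hpos (c : ℝ) : 0 ≤ q ^ c := (rpow_pos_of_pos h0 c).le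
  refine HasSum.tsum_eq <| (oddEvenShearEquiv.hasSum_iff).mp <| HasSum.sum ?_ ?_
  · convert hasSum_mul_of_nonneg (hθ 2 (1/2) two_pos) (hθ 6 (1/2) (by norm_num))
      (fun _ => hpos _) (fun _ => hpos _) using 2 with p
    simp only [Function.comp_apply, oddEvenShearEquiv, Equiv.coe_fn_mk, Sum.elim_inl,
      ← rpow_add h0]
    congr 1
    push_cast
    ring
  · convert hasSum_mul_of_nonneg (hθ₀ 2 two_pos) (hθ₀ 6 (by norm_num))
      (fun _ => hpos _) (fun _ => hpos _) using 2 with p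
    simp only [Function.comp_apply, oddEvenShearEquiv, Equiv.coe_fn_mk, Sum.elim_inr,
      ← rpow_add h0]
    congr 1
    push_cast
    ring
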